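/- Let \((\theta^{(t)})_{t \ge 0}\) be an inhomogeneous Markov chain with kernels \(\hat P_t\) each satisfying the Doeblin condition with constant \(\alpha^* \in (0,1)\). For bounded measurable functions \(f, g\), \(|\mathrm{Cov}(f(\theta^{(j)}), g(\theta^{(k)}))| \le 8 \|f\|_\infty \|g\|_\infty (1-\alpha^*)^{|k-j|}\). -/

import Mathlib

/-!
Doeblin's condition makes every kernel shrink oscillations: centring `h` at the midpoint of its
range and splitting along a Hahn decomposition of `P x` against `P y` gives
`|∫ h ∂(P x) - ∫ h ∂(P y)| ≤ osc h · tvDist (P x) (P y)`. Iterating, the function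
`G x = ∫ g ∂(P̂_{j+1} ⋯ P̂_k)(x)` has oscillation at most `2 ‖g‖∞ (1 - α*)^(k-j)`. By the Markov
property the covariance equals `∫ f (G - ∫ G)` against the law of `θ^(j)`, so it is at most
`‖f‖∞` times that oscillation.
-/

open MeasureTheory

noncomputable def tvDist {Θ : Type*} [MeasurableSpace Θ] (μ ν : Measure Θ) : ℝ :=
  sSup {r : ℝ | ∃ A : Set Θ, MeasurableSet A ∧ r = |(μ A).toReal - (ν A).toReal|}

/-- `stepK Ps j m` is the `m`-step transition law from time `j` of the
inhomogeneous chain with kernels `Ps`, i.e. the composition `P̂_{j+1} ⋯ P̂_{j+m}`. -/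
noncomputable def stepK {Θ : Type*} [MeasurableSpace Θ]
    (Ps : ℕ → Θ → Measure Θ) (j : ℕ) : ℕ → Θ → Measure Θ
  | 0 => fun x => Measure.dirac x
  | m + 1 => fun x => (stepK Ps j m x).bind (Ps (j + m + 1))

open ProbabilityTheory

section TotalVariation

variable {Θ : Type*} [MeasurableSpace Θ]

lemma integrable_of_abs_le {μ : Measure Θ} [IsFiniteMeasure μ] {h : Θ → ℝ} (hh : Measurable h)
    {C : ℝ} (hC : ∀ x, |h x| ≤ C) : Integrable h μ :=
  .of_bound hh.aestronglyMeasurable C (.of_forall hC)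

lemma integrable_of_abs_sub_le {μ : Measure Θ} [IsProbabilityMeasure μ] {h : Θ → ℝ}
    (hh : Measurable h) {D : ℝ} (hosc : ∀ x y, |h x - h y| ≤ D) : Integrable h μ := by
  obtain ⟨x₀⟩ := nonempty_of_isProbabilityMeasure μ
  exact integrable_of_abs_le hh (C := |h x₀| + D) fun x => by
    linarith [abs_sub_abs_le_abs_sub (h x) (h x₀), hosc x x₀]

lemma le_tvDist {μ ν : Measure Θ} [IsProbabilityMeasure μ] [IsProbabilityMeasure ν]
    {A : Set Θ} (hA : MeasurableSet A) : |μ.real A - ν.real A| ≤ tvDist μ ν := by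
  refine le_csSup ⟨1, ?_⟩ ⟨A, hA, rfl⟩
  rintro _ ⟨B, -, rfl⟩
  exact abs_sub_le_of_nonneg_of_le measureReal_nonneg measureReal_le_one measureReal_nonneg
    measureReal_le_one

lemma abs_integral_sub_integral_le_of_le {μ ν : Measure Θ} [IsFiniteMeasure μ] (hle : ν ≤ μ)
    {h : Θ → ℝ} (hh : Measurable h) {C : ℝ} (hC : ∀ x, |h x| ≤ C) :
    |∫ x, h x ∂μ - ∫ x, h x ∂ν| ≤ C * (μ.real Set.univ - ν.real Set.univ) := by
  have : IsFiniteMeasure ν := isFiniteMeasure_of_le μ hle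
  obtain ⟨ρ, _, rfl⟩ : ∃ ρ, IsFiniteMeasure ρ ∧ μ = ρ + ν :=
    ⟨μ - ν, inferInstance, (Measure.sub_add_cancel_of_le hle).symm⟩
  rw [integral_add_measure (integrable_of_abs_le hh hC) (integrable_of_abs_le hh hC),
    measureReal_add_apply, add_sub_cancel_right, add_sub_cancel_right]
  exact norm_integral_le_of_norm_le_const
    (.of_forall fun x => (Real.norm_eq_abs _).trans_le (hC x))

lemma abs_integral_sub_integral_le_tvDist {μ ν : Measure Θ} [IsProbabilityMeasure μ]
    [IsProbabilityMeasure ν] {h : Θ → ℝ} (hh : Measurable h) {C : ℝ} (hC : ∀ x, |h x| ≤ C) :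
    |∫ x, h x ∂μ - ∫ x, h x ∂ν| ≤ 2 * C * tvDist μ ν := by
  obtain ⟨S, hS, hνμ, hμν⟩ := hahn_decomposition μ ν
  have hle_S : ν.restrict S ≤ μ.restrict S := Measure.le_iff.2 fun t ht => by
    simpa only [Measure.restrict_apply ht] using hνμ _ (ht.inter hS) Set.inter_subset_right
  have hle_Sc : μ.restrict Sᶜ ≤ ν.restrict Sᶜ := Measure.le_iff.2 fun t ht => by
    simpa only [Measure.restrict_apply ht] using hμν _ (ht.inter hS.compl) Set.inter_subset_right
  have on_S := abs_integral_sub_integral_le_of_le hle_S hh hC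
  have on_Sc := abs_integral_sub_integral_le_of_le hle_Sc hh hC
  simp only [measureReal_restrict_apply_univ] at on_S on_Sc
  have hSc : ν.real Sᶜ - μ.real Sᶜ = μ.real S - ν.real S := by
    rw [probReal_compl_eq_one_sub hS, probReal_compl_eq_one_sub hS]; ring
  have htv : |μ.real S - ν.real S| ≤ tvDist μ ν := le_tvDist hS
  rw [← integral_add_compl hS (integrable_of_abs_le (μ := μ) hh hC),
    ← integral_add_compl hS (integrable_of_abs_le (μ := ν) hh hC)]
  have hC0 : 0 ≤ C := (abs_nonneg _).trans (hC (nonempty_of_isProbabilityMeasure μ).some)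
  have hd : C * (μ.real S - ν.real S) ≤ C * tvDist μ ν :=
    mul_le_mul_of_nonneg_left ((le_abs_self _).trans htv) hC0
  rw [hSc, abs_sub_comm] at on_Sc
  calc _ = |(∫ x in S, h x ∂μ - ∫ x in S, h x ∂ν) + (∫ x in Sᶜ, h x ∂μ - ∫ x in Sᶜ, h x ∂ν)| := by
        ring_nf
    _ ≤ C * (μ.real S - ν.real S) + C * (μ.real S - ν.real S) :=
        (abs_add_le _ _).trans (add_le_add on_S on_Sc)
    _ ≤ 2 * C * tvDist μ ν := by linarith

lemma exists_abs_sub_le_half {α : Type*} [Nonempty α] {h : α → ℝ} {D : ℝ}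
    (hosc : ∀ x y, |h x - h y| ≤ D) : ∃ c, ∀ x, |h x - c| ≤ D / 2 := by
  obtain ⟨x₀⟩ := ‹Nonempty α›
  have hbdd : BddBelow (Set.range h) :=
    ⟨h x₀ - D, by rintro _ ⟨y, rfl⟩; linarith [(abs_le.1 (hosc x₀ y)).2]⟩
  refine ⟨(⨅ x, h x) + D / 2, fun x => abs_le.2 ⟨?_, ?_⟩⟩
  · linarith [ciInf_le hbdd x]
  · have : h x - D ≤ ⨅ y, h y := le_ciInf fun y => by linarith [(abs_le.1 (hosc x y)).2]
    linarith

lemma abs_integral_sub_integral_le_tvDist_of_abs_sub_le {μ ν : Measure Θ} [IsProbabilityMeasure μ]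
    [IsProbabilityMeasure ν] {h : Θ → ℝ} (hh : Measurable h) {D : ℝ}
    (hosc : ∀ x y, |h x - h y| ≤ D) :
    |∫ x, h x ∂μ - ∫ x, h x ∂ν| ≤ D * tvDist μ ν := by
  have := nonempty_of_isProbabilityMeasure μ
  obtain ⟨c, hc⟩ := exists_abs_sub_le_half hosc
  have := abs_integral_sub_integral_le_tvDist (μ := μ) (ν := ν) (hh.sub_const c) hc
  rw [integral_sub (integrable_of_abs_sub_le hh hosc) (integrable_const c),
    integral_sub (integrable_of_abs_sub_le hh hosc) (integrable_const c)] at this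
  simpa [mul_div_cancel₀] using this

end TotalVariation

lemma MeasureTheory.Measure.integral_bind {α β E : Type*} [MeasurableSpace α] [MeasurableSpace β]
    [NormedAddCommGroup E] [NormedSpace ℝ E] {μ : Measure α} {P : α → Measure β}
    (hP : Measurable P) {h : β → E} (hh : Integrable h (μ.bind P)) :
    ∫ y, h y ∂(μ.bind P) = ∫ x, ∫ y, h y ∂(P x) ∂μ := by
  let κ : Kernel α β := ⟨P, hP⟩
  change Integrable h (κ ∘ₘ μ) at hh
  change ∫ y, h y ∂(κ ∘ₘ μ) = ∫ x, ∫ y, h y ∂(κ x) ∂μ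
  rw [Measure.comp_eq_comp_const_apply] at hh ⊢
  rw [Kernel.integral_comp hh, Kernel.const_apply]

lemma Measurable.integral_measure {α β : Type*} [MeasurableSpace α] [MeasurableSpace β]
    {P : α → Measure β} (hP : Measurable P) {h : β → ℝ} (hh : Measurable h) :
    Measurable fun x => ∫ y, h y ∂(P x) :=
  (StronglyMeasurable.integral_kernel (κ := ⟨P, hP⟩) hh.stronglyMeasurable).measurable

section StepK

variable {Θ : Type*} [MeasurableSpace Θ] {Ps : ℕ → Θ → Measure Θ}

lemma measurable_stepK (hPs : ∀ t, Measurable (Ps t)) (j m : ℕ) : Measurable (stepK Ps j m) := by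
  induction m with
  | zero => exact Measure.measurable_dirac
  | succ m ih => exact (Measure.measurable_bind' (hPs _)).comp ih

lemma isProbabilityMeasure_stepK (hPs : ∀ t, Measurable (Ps t))
    (hPp : ∀ t x, IsProbabilityMeasure (Ps t x)) (j m : ℕ) (x : Θ) :
    IsProbabilityMeasure (stepK Ps j m x) := by
  induction m with
  | zero => exact Measure.dirac.isProbabilityMeasure
  | succ m ih =>
    constructor
    rw [stepK, Measure.bind_apply MeasurableSet.univ (hPs _).aemeasurable]
    simp [measure_univ]

noncomputable def stepKernel (hPs : ∀ t, Measurable (Ps t)) (j m : ℕ) : Kernel Θ Θ :=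
  ⟨stepK Ps j m, measurable_stepK hPs j m⟩

lemma isMarkovKernel_stepKernel (hPs : ∀ t, Measurable (Ps t))
    (hPp : ∀ t x, IsProbabilityMeasure (Ps t x)) (j m : ℕ) :
    IsMarkovKernel (stepKernel hPs j m) :=
  ⟨isProbabilityMeasure_stepK hPs hPp j m⟩

lemma abs_integral_stepK_sub_le (hPs : ∀ t, Measurable (Ps t))
    (hPp : ∀ t x, IsProbabilityMeasure (Ps t x)) {δ : ℝ}
    (hD : ∀ t x y, tvDist (Ps t x) (Ps t y) ≤ δ) (j m : ℕ) {h : Θ → ℝ} (hh : Measurable h)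
    {D : ℝ} (hosc : ∀ x y, |h x - h y| ≤ D) (x y : Θ) :
    |∫ z, h z ∂(stepK Ps j m x) - ∫ z, h z ∂(stepK Ps j m y)| ≤ δ ^ m * D := by
  induction m generalizing h D with
  | zero =>
    simpa [stepK, integral_dirac' _ _ hh.stronglyMeasurable] using hosc x y
  | succ m ih =>
    set P := Ps (j + m + 1)
    have hPh_osc : ∀ w w', |∫ z, h z ∂(P w) - ∫ z, h z ∂(P w')| ≤ δ * D := fun w w' => by
      have hD0 : 0 ≤ D := (abs_nonneg _).trans (hosc w w)
      calc _ ≤ D * tvDist (P w) (P w') := abs_integral_sub_integral_le_tvDist_of_abs_sub_le hh hosc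
        _ ≤ D * δ := mul_le_mul_of_nonneg_left (hD _ w w') hD0
        _ = δ * D := mul_comm _ _
    have hstep : ∀ w, ∫ z, h z ∂(stepK Ps j (m + 1) w)
        = ∫ v, ∫ z, h z ∂(P v) ∂(stepK Ps j m w) := fun w => by
      have : IsProbabilityMeasure ((stepK Ps j m w).bind P) :=
        isProbabilityMeasure_stepK hPs hPp j (m + 1) w
      exact Measure.integral_bind (hPs _) (integrable_of_abs_sub_le hh hosc)
    rw [hstep, hstep, pow_succ, mul_assoc]
    exact ih ((hPs _).integral_measure hh) hPh_osc

end StepK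

section Covariance

variable {Θ Θ' Ω : Type*} [MeasurableSpace Θ] [MeasurableSpace Θ'] [MeasurableSpace Ω]

lemma abs_sub_integral_le_of_abs_sub_le {η : Measure Θ} [IsProbabilityMeasure η] {G : Θ → ℝ}
    (hG : Measurable G) {D : ℝ} (hosc : ∀ x y, |G x - G y| ≤ D) (x : Θ) :
    |G x - ∫ y, G y ∂η| ≤ D := by
  have hGx : G x - ∫ y, G y ∂η = ∫ y, (G x - G y) ∂η := by
    rw [integral_sub (integrable_const _) (integrable_of_abs_sub_le hG hosc), integral_const,
      probReal_univ, one_smul]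
  simpa [hGx] using norm_integral_le_of_norm_le_const (μ := η)
    (.of_forall fun y => (Real.norm_eq_abs _).trans_le (hosc x y))

lemma abs_integral_mul_sub_le_of_abs_sub_le {η : Measure Θ} [IsProbabilityMeasure η]
    {f G : Θ → ℝ} (hf : Measurable f) {Cf : ℝ} (hCf : ∀ x, |f x| ≤ Cf) (hG : Measurable G)
    {D : ℝ} (hosc : ∀ x y, |G x - G y| ≤ D) :
    |∫ x, f x * G x ∂η - (∫ x, f x ∂η) * ∫ x, G x ∂η| ≤ Cf * D := by
  have hGint : Integrable G η := integrable_of_abs_sub_le hG hosc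
  have hcentered : ∫ x, f x * G x ∂η - (∫ x, f x ∂η) * ∫ x, G x ∂η
      = ∫ x, f x * (G x - ∫ y, G y ∂η) ∂η := by
    simp_rw [mul_sub]
    rw [integral_sub (hGint.bdd_mul hf.aestronglyMeasurable (.of_forall hCf))
      ((integrable_of_abs_le hf hCf).mul_const _), integral_mul_const]
  have hbound : ∀ x, ‖f x * (G x - ∫ y, G y ∂η)‖ ≤ Cf * D := fun x => by
    rw [Real.norm_eq_abs, abs_mul]
    exact mul_le_mul (hCf x) (abs_sub_integral_le_of_abs_sub_le hG hosc x) (abs_nonneg _)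
      ((abs_nonneg _).trans (hCf x))
  rw [hcentered]
  simpa using norm_integral_le_of_norm_le_const (μ := η) (.of_forall hbound)

lemma map_prodMk_eq_compProd {μ : Measure Ω} [IsFiniteMeasure μ] {X : Ω → Θ} {Y : Ω → Θ'}
    (hX : Measurable X) (hY : Measurable Y) {κ : Kernel Θ Θ'} [IsSFiniteKernel κ]
    (hjoint : ∀ A B, MeasurableSet A → MeasurableSet B →
      μ {ω | X ω ∈ A ∧ Y ω ∈ B} = ∫⁻ x in A, κ x B ∂(μ.map X)) :
    μ.map (fun ω => (X ω, Y ω)) = μ.map X ⊗ₘ κ := by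
  refine Measure.ext_prod fun {A B} hA hB => ?_
  rw [Measure.map_apply (hX.prodMk hY) (hA.prod hB), Measure.compProd_apply_prod hA hB]
  exact hjoint A B hA hB

lemma integral_comp_prodMk_eq {μ : Measure Ω} [IsProbabilityMeasure μ] {X : Ω → Θ} {Y : Ω → Θ'}
    (hX : Measurable X) (hY : Measurable Y) {κ : Kernel Θ Θ'} [IsMarkovKernel κ]
    (hmap : μ.map (fun ω => (X ω, Y ω)) = μ.map X ⊗ₘ κ) {F : Θ × Θ' → ℝ} (hF : Measurable F)
    {C : ℝ} (hC : ∀ p, |F p| ≤ C) :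
    ∫ ω, F (X ω, Y ω) ∂μ = ∫ x, ∫ y, F (x, y) ∂(κ x) ∂(μ.map X) := by
  have := Measure.isProbabilityMeasure_map (μ := μ) hX.aemeasurable
  rw [← integral_map (hX.prodMk hY).aemeasurable hF.aestronglyMeasurable, hmap,
    Measure.integral_compProd (integrable_of_abs_le hF hC)]

lemma abs_cov_le_of_abs_sub_le {μ : Measure Ω} [IsProbabilityMeasure μ] {X : Ω → Θ} {Y : Ω → Θ'}
    (hX : Measurable X) (hY : Measurable Y) {κ : Kernel Θ Θ'} [IsMarkovKernel κ]
    (hmap : μ.map (fun ω => (X ω, Y ω)) = μ.map X ⊗ₘ κ) {f : Θ → ℝ} {g : Θ' → ℝ}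
    (hf : Measurable f) (hg : Measurable g) {Cf Cg : ℝ} (hCf : ∀ x, |f x| ≤ Cf)
    (hCg : ∀ y, |g y| ≤ Cg) {D : ℝ} (hosc : ∀ x x', |∫ y, g y ∂(κ x) - ∫ y, g y ∂(κ x')| ≤ D) :
    |(∫ ω, f (X ω) * g (Y ω) ∂μ) - (∫ ω, f (X ω) ∂μ) * (∫ ω, g (Y ω) ∂μ)| ≤ Cf * D := by
  have := Measure.isProbabilityMeasure_map (μ := μ) hX.aemeasurable
  have hfg : ∫ ω, f (X ω) * g (Y ω) ∂μ = ∫ x, f x * ∫ y, g y ∂(κ x) ∂(μ.map X) := by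
    simp_rw [← integral_const_mul]
    exact integral_comp_prodMk_eq (F := fun p => f p.1 * g p.2) hX hY hmap
      ((hf.comp measurable_fst).mul (hg.comp measurable_snd)) fun p => by
        rw [abs_mul]
        exact mul_le_mul (hCf _) (hCg _) (abs_nonneg _) ((abs_nonneg _).trans (hCf p.1))
  have hg' : ∫ ω, g (Y ω) ∂μ = ∫ x, ∫ y, g y ∂(κ x) ∂(μ.map X) :=
    integral_comp_prodMk_eq (F := fun p => g p.2) hX hY hmap (hg.comp measurable_snd)
      fun p => hCg p.2
  rw [hfg, hg', ← integral_map hX.aemeasurable hf.aestronglyMeasurable]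
  exact abs_integral_mul_sub_le_of_abs_sub_le hf hCf (κ.measurable.integral_measure hg) hosc

end Covariance

theorem stmt7_general {Θ Ω : Type*} [MeasurableSpace Θ] [MeasurableSpace Ω]
    (μ : Measure Ω) [IsProbabilityMeasure μ]
    (X : ℕ → Ω → Θ) (hXmeas : ∀ t, Measurable (X t))
    (Phat : ℕ → Θ → Measure Θ) (hPhatmeas : ∀ t, Measurable (Phat t))
    (hPhat : ∀ t θ, IsProbabilityMeasure (Phat t θ))
    (αs : ℝ)
    (hDoeblin : ∀ t θ ζ, tvDist (Phat t θ) (Phat t ζ) ≤ 1 - αs)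
    -- Markov property: the joint law of `(X j, X k)` for `j ≤ k` is the law of `X j`
    -- coupled through the composed kernel `P̂_{j+1} ⋯ P̂_k`.
    (hjoint : ∀ j k : ℕ, j ≤ k → ∀ A B : Set Θ, MeasurableSet A → MeasurableSet B →
      μ {ω | X j ω ∈ A ∧ X k ω ∈ B}
        = ∫⁻ x in A, stepK Phat j (k - j) x B ∂(Measure.map (X j) μ))
    (f g : Θ → ℝ) (hf : Measurable f) (hg : Measurable g)
    (Cf Cg : ℝ) (hCf : ∀ θ, |f θ| ≤ Cf) (hCg : ∀ θ, |g θ| ≤ Cg) :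
    ∀ j k : ℕ,
      |(∫ ω, f (X j ω) * g (X k ω) ∂μ)
          - (∫ ω, f (X j ω) ∂μ) * (∫ ω, g (X k ω) ∂μ)|
        ≤ 8 * Cf * Cg * (1 - αs) ^ (Nat.dist j k) := by
  intro j k
  wlog hjk : j ≤ k generalizing j k f g Cf Cg
  · have hkj := this g f hg hf Cg Cf hCg hCf k j (le_of_not_ge hjk)
    simp_rw [Nat.dist_comm j k, mul_comm (f _) (g _), mul_comm (∫ ω, f (X j ω) ∂μ)]
    linarith
  have := isMarkovKernel_stepKernel hPhatmeas hPhat j (k - j)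
  have hmap := map_prodMk_eq_compProd (hXmeas j) (hXmeas k)
    (κ := stepKernel hPhatmeas j (k - j)) (hjoint j k hjk)
  have hosc := abs_integral_stepK_sub_le hPhatmeas hPhat hDoeblin j (k - j) hg
    (D := 2 * Cg) fun x y => by linarith [abs_sub (g x) (g y), hCg x, hCg y]
  have hcov := abs_cov_le_of_abs_sub_le (hXmeas j) (hXmeas k) hmap hf hg hCf hCg hosc
  rw [Nat.dist_eq_sub_of_le hjk]
  linarith [abs_nonneg ((∫ ω, f (X j ω) * g (X k ω) ∂μ)
    - (∫ ω, f (X j ω) ∂μ) * (∫ ω, g (X k ω) ∂μ))]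

theorem stmt7 {Θ Ω : Type*} [MeasurableSpace Θ] [MeasurableSpace Ω]
    (μ : Measure Ω) [IsProbabilityMeasure μ]
    (X : ℕ → Ω → Θ) (hXmeas : ∀ t, Measurable (X t))
    (Phat : ℕ → Θ → Measure Θ) (hPhatmeas : ∀ t, Measurable (Phat t))
    (hPhat : ∀ t θ, IsProbabilityMeasure (Phat t θ))
    (αs : ℝ) (hαs0 : 0 < αs) (hαs1 : αs < 1)
    (hDoeblin : ∀ t θ ζ, tvDist (Phat t θ) (Phat t ζ) ≤ 1 - αs)
    -- Markov property: the joint law of `(X j, X k)` for `j ≤ k` is the law of `X j`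
    -- coupled through the composed kernel `P̂_{j+1} ⋯ P̂_k`.
    (hjoint : ∀ j k : ℕ, j ≤ k → ∀ A B : Set Θ, MeasurableSet A → MeasurableSet B →
      μ {ω | X j ω ∈ A ∧ X k ω ∈ B}
        = ∫⁻ x in A, stepK Phat j (k - j) x B ∂(Measure.map (X j) μ))
    (f g : Θ → ℝ) (hf : Measurable f) (hg : Measurable g)
    (Cf Cg : ℝ) (hCf : ∀ θ, |f θ| ≤ Cf) (hCg : ∀ θ, |g θ| ≤ Cg) :
    ∀ j k : ℕ,
      |(∫ ω, f (X j ω) * g (X k ω) ∂μ)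
          - (∫ ω, f (X j ω) ∂μ) * (∫ ω, g (X k ω) ∂μ)|
        ≤ 8 * Cf * Cg * (1 - αs) ^ (Nat.dist j k) :=
  stmt7_general μ X hXmeas Phat hPhatmeas hPhat αs hDoeblin hjoint f g hf hg Cf Cg hCf hCg
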